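/- The predictive risk of the marginal regression estimator is R_V(β̂_m) = d/n + η² (d+1)/n. -/

import Mathlib

/-!
Write `X = Z Q` with `Q = Σ^{1/2}` and `Z` an `n × d` matrix of iid `N(0, 1)` entries, and put
`v = Q β`. Since `Q Σ⁻¹ Q = 1`, the loss is `‖Q (β̂_m - β)‖²` with
`Q (β̂_m - β) = n⁻¹ ∑ᵢ zᵢ yᵢ - v`, `yᵢ = zᵢ ⬝ v + εᵢ`. Its `k`-th coordinate is the centred mean of
`n` iid copies of `z_k (z ⬝ v + ε)`, whose variance `‖v‖² + v_k² + σ²` follows from the Gaussian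
moments `E z² = 1`, `E z⁴ = 3` and independence. Summing over `k` gives
`E ‖Q (β̂_m - β)‖² = (d σ² + (d + 1) ‖v‖²) / n`, and `‖v‖² = βᵀ Σ β = σ² η²`.
-/

open MeasureTheory ProbabilityTheory Matrix Filter
open scoped ENNReal NNReal Topology

noncomputable section
open scoped Classical

namespace Dicker

/-- Sample space: raw iid standard normal design entries and the error vector. -/
abbrev Omega (n d : ℕ) : Type := (Fin n → Fin d → ℝ) × (Fin n → ℝ)

/-- Law of the raw matrix of iid standard normal entries. -/
def PX (n d : ℕ) : Measure (Fin n → Fin d → ℝ) :=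
  Measure.pi fun _ => Measure.pi fun _ => gaussianReal 0 1

/-- Base probability measure of the Gaussian linear model with noise variance `σ2`. -/
def P (n d : ℕ) (σ2 : ℝ≥0) : Measure (Omega n d) :=
  (PX n d).prod (Measure.pi fun _ : Fin n => gaussianReal 0 σ2)

/-- Square root of a positive semidefinite matrix (junk value `0` otherwise). -/
def msqrt {d : ℕ} (S : Matrix (Fin d) (Fin d) ℝ) : Matrix (Fin d) (Fin d) ℝ :=
  if h : S.PosSemidef then
    (h.1.eigenvectorUnitary : Matrix (Fin d) (Fin d) ℝ) *
      Matrix.diagonal (Real.sqrt ∘ h.1.eigenvalues) *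
      (star h.1.eigenvectorUnitary : Matrix (Fin d) (Fin d) ℝ)
  else 0

/-- The design matrix `X`, whose rows are iid `N(0, S)`. -/
def dMat {n d : ℕ} (S : Matrix (Fin d) (Fin d) ℝ) (ω : Omega n d) :
    Matrix (Fin n) (Fin d) ℝ :=
  Matrix.of ω.1 * msqrt S

/-- The response vector `y = X β + ε`. -/
def resp {n d : ℕ} (S : Matrix (Fin d) (Fin d) ℝ) (β : Fin d → ℝ) (ω : Omega n d) :
    Fin n → ℝ :=
  dMat S ω *ᵥ β + ω.2

/-- An estimator of the coefficient vector, a function of the data `(y, X)`. -/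
abbrev Estimator (n d : ℕ) : Type :=
  (Fin n → ℝ) → Matrix (Fin n) (Fin d) ℝ → (Fin d → ℝ)

/-- The predictive risk `R_V(est) = σ⁻² E[(est − β)ᵀ Σ (est − β)]`. -/
def risk {d : ℕ} (n : ℕ) (S : Matrix (Fin d) (Fin d) ℝ) (β : Fin d → ℝ) (σ2 : ℝ≥0)
    (est : Estimator n d) : ℝ≥0∞ :=
  (σ2 : ℝ≥0∞)⁻¹ *
    ∫⁻ ω, ENNReal.ofReal
      ((est (resp S β ω) (dMat S ω) - β) ⬝ᵥ (S *ᵥ (est (resp S β ω) (dMat S ω) - β)))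
      ∂(P n d σ2)

/-- The signal-to-noise ratio `η² = βᵀ Σ β / σ²`. -/
def snr {d : ℕ} (S : Matrix (Fin d) (Fin d) ℝ) (β : Fin d → ℝ) (σ2 : ℝ≥0) : ℝ :=
  (β ⬝ᵥ S *ᵥ β) / σ2

/-- The Moore–Penrose pseudoinverse of a square real matrix, characterized by the four
Penrose conditions (which determine it uniquely; it always exists). -/
def pinv {k : ℕ} (A : Matrix (Fin k) (Fin k) ℝ) : Matrix (Fin k) (Fin k) ℝ :=
  if h : ∃ B, A * B * A = A ∧ B * A * B = B ∧ (A * B)ᵀ = A * B ∧ (B * A)ᵀ = B * A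
  then h.choose else 0

/-- The OLS estimator `(XᵀX)⁻ Xᵀ y` (Moore–Penrose pseudoinverse version). -/
def ols {n d : ℕ} : Estimator n d := fun y X => (pinv (Xᵀ * X) * Xᵀ) *ᵥ y

/-- The OLS estimator `(XᵀX)⁻¹ Xᵀ y` (matrix-inverse version). -/
def olsI {n d : ℕ} : Estimator n d := fun y X => ((Xᵀ * X)⁻¹ * Xᵀ) *ᵥ y

/-- The trivial estimator `β̂ = 0`. -/
def nullEst {n d : ℕ} : Estimator n d := fun _ _ => 0

/-- The James–Stein estimator with shrinkage parameter `λ ∈ [0,∞]`; `β̂_js(∞) = 0`. -/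
def jsE {n d : ℕ} (lam : ℝ≥0∞) : Estimator n d :=
  fun y X => if lam = ∞ then 0 else (1 + lam.toReal)⁻¹ • ols y X

/-- The oracle James–Stein shrinkage parameter `λ_js*`. -/
def lamJSStar (n d : ℕ) (e : ℝ) : ℝ≥0∞ :=
  if d + 1 < n then (d : ℝ≥0∞) / (ENNReal.ofReal e * ((n : ℝ≥0∞) - d - 1))
  else if n + 1 < d then (d : ℝ≥0∞) / (ENNReal.ofReal e * ((d : ℝ≥0∞) - n - 1))
  else ∞

/-- The ridge estimator `(XᵀX + nλΣ)⁻ Xᵀ y` (pseudoinverse version). -/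
def ridgeP {n d : ℕ} (S : Matrix (Fin d) (Fin d) ℝ) (lam : ℝ) : Estimator n d :=
  fun y X => (pinv (Xᵀ * X + ((n : ℝ) * lam) • S) * Xᵀ) *ᵥ y

/-- Pseudoinverse ridge estimator with parameter `λ ∈ [0,∞]`; equal to `0` at `λ = ∞`. -/
def ridgePE {n d : ℕ} (S : Matrix (Fin d) (Fin d) ℝ) (lam : ℝ≥0∞) : Estimator n d :=
  fun y X => if lam = ∞ then 0 else ridgeP S lam.toReal y X

/-- The ridge estimator `(XᵀX + nλΣ)⁻¹ Xᵀ y` (matrix-inverse version). -/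
def ridgeI {n d : ℕ} (S : Matrix (Fin d) (Fin d) ℝ) (lam : ℝ) : Estimator n d :=
  fun y X => ((Xᵀ * X + ((n : ℝ) * lam) • S)⁻¹ * Xᵀ) *ᵥ y

/-- Matrix-inverse ridge estimator with parameter `λ ∈ [0,∞]`; equal to `0` at `λ = ∞`. -/
def ridgeIE {n d : ℕ} (S : Matrix (Fin d) (Fin d) ℝ) (lam : ℝ≥0∞) : Estimator n d :=
  fun y X => if lam = ∞ then 0 else ridgeI S lam.toReal y X

/-- The marginal regression estimator `n⁻¹ Σ⁻¹ Xᵀ y`. -/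
def marg {n d : ℕ} (S : Matrix (Fin d) (Fin d) ℝ) : Estimator n d :=
  fun y X => (n : ℝ)⁻¹ • ((S⁻¹ * Xᵀ) *ᵥ y)

/-- Squared Euclidean norm of a vector. -/
def sqnorm {m : ℕ} (v : Fin m → ℝ) : ℝ := ∑ i, (v i) ^ 2

/-- The usual estimator `σ̂² = (n−d)⁻¹ ‖y − X β̂_ols‖²` of the noise variance. -/
def hatSigma2 {n d : ℕ} (y : Fin n → ℝ) (X : Matrix (Fin n) (Fin d) ℝ) : ℝ :=
  ((n : ℝ) - d)⁻¹ * sqnorm (y - X *ᵥ olsI y X)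

/-- The estimator `η̂² = max{‖y‖²/(n σ̂²) − 1, 0}` of the signal-to-noise ratio. -/
def hatEta2 {n d : ℕ} (y : Fin n → ℝ) (X : Matrix (Fin n) (Fin d) ℝ) : ℝ :=
  max (sqnorm y / ((n : ℝ) * hatSigma2 y X) - 1) 0

/-- The adaptive ridge estimator `β̌_r`, with `λ̂_r* = d/(n η̂²)` (equal to `0` when `η̂² = 0`). -/
def adaRidge {n d : ℕ} (S : Matrix (Fin d) (Fin d) ℝ) : Estimator n d :=
  fun y X => if hatEta2 y X = 0 then 0
    else ridgeI S ((d : ℝ) / ((n : ℝ) * hatEta2 y X)) y X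

/-- The adaptive James–Stein estimator `β̌_js`, with `λ̂_js* = d/(η̂²(n−d−1))`
(equal to `0` when `η̂² = 0`). -/
def adaJS {n d : ℕ} : Estimator n d :=
  fun y X => if hatEta2 y X = 0 then 0
    else (1 + (d : ℝ) / (hatEta2 y X * ((n : ℝ) - d - 1)))⁻¹ • olsI y X

/-- Stieltjes transform of the Marčenko–Pastur distribution. -/
def mMP (ρ s : ℝ) : ℝ :=
  -(1 / (2 * ρ * s)) * (s + ρ - 1 + Real.sqrt ((s + ρ - 1) ^ 2 - 4 * ρ * s))

/-- Closed form of the asymptotic predictive risk of the oracle ridge estimator. -/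
def Rr (ρ e : ℝ) : ℝ :=
  (1 / (2 * ρ)) * (e * (ρ - 1) - ρ + Real.sqrt ((e * (ρ - 1) - ρ) ^ 2 + 4 * ρ ^ 2 * e))

/-- The `ℓ²→ℓ²` operator norm of a square real matrix. -/
def opNorm {k : ℕ} (A : Matrix (Fin k) (Fin k) ℝ) : ℝ :=
  ‖Matrix.toEuclideanCLM (𝕜 := ℝ) A‖

/-- Smallest eigenvalue of a Hermitian real matrix (junk value `0` otherwise). -/
def smallestEig {k : ℕ} (S : Matrix (Fin k) (Fin k) ℝ) : ℝ :=
  if h : S.IsHermitian then ⨅ i, h.eigenvalues i else 0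


/-- The oracle ridge shrinkage parameter `λ_r* = d/(n η²)` (in `[0,∞]`). -/
def lamRStar (n d : ℕ) (e : ℝ) : ℝ≥0∞ :=
  (d : ℝ≥0∞) / ((n : ℝ≥0∞) * ENNReal.ofReal e)

/-- Asymptotic predictive risk of a James–Stein estimator with parameter `λ`. -/
def RjsLim (lam ρ e : ℝ) : ℝ := (lam ^ 2 * e + ρ / (1 - ρ)) / (1 + lam) ^ 2

/-- Limiting optimal James–Stein shrinkage parameter `λ_js = ρ/(η²(1−ρ))`. -/
def lamJSlim (ρ e : ℝ) : ℝ := ρ / (e * (1 - ρ))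

/-- Limiting Baranchik shrinkage parameter `λ_bar`. -/
def lamBar (c ρ e : ℝ) : ℝ := c * (1 - ρ) / (e + ρ - c * (1 - ρ))

/-- Baranchik's estimator. -/
def baranchik {n d : ℕ} (c : ℝ) : Estimator n d :=
  fun y X => (1 - c * sqnorm (y - X *ᵥ olsI y X) / sqnorm (X *ᵥ olsI y X)) • olsI y X

/-- The James–Stein estimator with a real shrinkage parameter (matrix-inverse OLS). -/
def jsR {n d : ℕ} (lam : ℝ) : Estimator n d := fun y X => (1 + lam)⁻¹ • olsI y X

/-- The marginal shrinkage estimator `(1/((1+λ)n)) Σ⁻¹ Xᵀ y`. -/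
def margShrink {n d : ℕ} (S : Matrix (Fin d) (Fin d) ℝ) (lam : ℝ) : Estimator n d :=
  fun y X => (1 + lam)⁻¹ • marg S y X

/-- The marginal shrinkage estimator with parameter `λ ∈ [0,∞]`; equal to `0` at `λ = ∞`. -/
def margShrinkE {n d : ℕ} (S : Matrix (Fin d) (Fin d) ℝ) (lam : ℝ≥0∞) : Estimator n d :=
  fun y X => if lam = ∞ then 0 else margShrink S lam.toReal y X

/-- The adaptive marginal shrinkage estimator with `λ̂_m* = d/(n η̂²) + (d+1)/n`
(equal to `0` when `η̂² = 0`). -/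
def adaMargShrink {n d : ℕ} (S : Matrix (Fin d) (Fin d) ℝ) : Estimator n d :=
  fun y X => if hatEta2 y X = 0 then 0
    else margShrink S ((d : ℝ) / ((n : ℝ) * hatEta2 y X) + ((d : ℝ) + 1) / n) y X

end Dicker

section GaussianMoments
open Real

lemma deriv_mul_exp_sq_half {p : ℝ → ℝ} (p' : ℝ → ℝ) (hp : ∀ t, HasDerivAt p (p' t) t) :
    deriv (fun t => p t * rexp (t ^ 2 / 2)) =
      fun t => (p' t + t * p t) * rexp (t ^ 2 / 2) := by
  refine funext fun t => HasDerivAt.deriv ?_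
  have he : HasDerivAt (fun t => rexp (t ^ 2 / 2)) (rexp (t ^ 2 / 2) * t) t := by
    simpa using ((hasDerivAt_pow 2 t).div_const 2).exp
  exact ((hp t).fun_mul he).congr_deriv (by ring)

lemma iteratedDeriv_four_exp_sq_half :
    iteratedDeriv 4 (fun t => rexp (t ^ 2 / 2)) =
      fun t => (t ^ 4 + 6 * t ^ 2 + 3) * rexp (t ^ 2 / 2) := by
  have h1 : iteratedDeriv 1 (fun t => rexp (t ^ 2 / 2)) = fun t => t * rexp (t ^ 2 / 2) := by
    simpa using deriv_mul_exp_sq_half (p := fun _ => 1) _ fun t => hasDerivAt_const t 1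
  have h2 : iteratedDeriv 2 (fun t => rexp (t ^ 2 / 2)) =
      fun t => (t ^ 2 + 1) * rexp (t ^ 2 / 2) := by
    rw [iteratedDeriv_succ, h1, deriv_mul_exp_sq_half (p := fun t => t) _ hasDerivAt_id]
    ext t; ring
  have h3 : iteratedDeriv 3 (fun t => rexp (t ^ 2 / 2)) =
      fun t => (t ^ 3 + 3 * t) * rexp (t ^ 2 / 2) := by
    rw [iteratedDeriv_succ, h2, deriv_mul_exp_sq_half _ fun t => (hasDerivAt_pow 2 t).add_const 1]
    ext t; push_cast; ring
  rw [iteratedDeriv_succ, h3, deriv_mul_exp_sq_half (p := fun t => t ^ 3 + 3 * t) _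
    fun t => (hasDerivAt_pow 3 t).add ((hasDerivAt_id t).const_mul 3)]
  ext t; push_cast; ring

lemma integral_pow_gaussianReal_zero_one (n : ℕ) :
    ∫ x, x ^ n ∂gaussianReal 0 1 = iteratedDeriv n (fun t => rexp (t ^ 2 / 2)) 0 := by
  have h := iteratedDeriv_mgf_zero (X := fun x => x) (μ := gaussianReal 0 1) (by simp) n
  simp only [mgf_fun_id_gaussianReal, zero_mul, zero_add, NNReal.coe_one, one_mul] at h
  simpa using h.symm

lemma integral_pow_four_gaussianReal_zero_one : ∫ x, x ^ 4 ∂gaussianReal 0 1 = 3 := by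
  simp [integral_pow_gaussianReal_zero_one, iteratedDeriv_four_exp_sq_half]

lemma integral_sq_gaussianReal_zero (v : ℝ≥0) : ∫ x, x ^ 2 ∂gaussianReal 0 v = v := by
  rw [← variance_of_integral_eq_zero measurable_id'.aemeasurable integral_id_gaussianReal,
    variance_fun_id_gaussianReal]

end GaussianMoments

def sampleMean {E ι : Type*} [Fintype ι] (g : E → ℝ) (x : ι → E) : ℝ :=
  (Fintype.card ι : ℝ)⁻¹ * ∑ i, g (x i)

section SampleMean
variable {E ι : Type*} [MeasurableSpace E] [Fintype ι] {ν : Measure E} [IsProbabilityMeasure ν]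
  {g : E → ℝ}

local notation "νⁿ" => Measure.pi fun _ : ι => ν

lemma memLp_sampleMean (hg : MemLp g 2 ν) : MemLp (sampleMean g) 2 νⁿ :=
  (memLp_finsetSum _ fun i _ => hg.comp_measurePreserving (measurePreserving_eval _ i)).const_mul _

lemma integrable_sq_sampleMean_sub (hg : MemLp g 2 ν) (c : ℝ) :
    Integrable (fun x => (sampleMean g x - c) ^ 2) νⁿ :=
  ((memLp_sampleMean hg).sub (memLp_const c)).integrable_sq

lemma integral_sampleMean [Nonempty ι] (hg : Integrable g ν) :
    ∫ x, sampleMean g x ∂νⁿ = ∫ y, g y ∂ν := by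
  simp only [sampleMean]
  rw [integral_const_mul, integral_finsetSum _ fun i _ => integrable_comp_eval hg]
  simp_rw [integral_comp_eval (μ := fun _ : ι => ν) hg.aestronglyMeasurable]
  simp

lemma variance_sampleMean (hg : MemLp g 2 ν) :
    Var[sampleMean g; νⁿ] = Var[g; ν] / Fintype.card ι := by
  have h := variance_sum_pi (μ := fun _ : ι => ν) (X := fun _ => g) fun _ => hg
  rw [Finset.sum_fn] at h
  unfold sampleMean
  rw [variance_const_mul, h]
  rcases eq_or_ne (Fintype.card ι : ℝ) 0 with h0 | h0
  · simp [h0]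
  · simp only [inv_pow, Finset.sum_const, Finset.card_univ, nsmul_eq_mul, div_eq_mul_inv]
    field_simp

lemma integral_sq_sampleMean_sub [Nonempty ι] (hg : MemLp g 2 ν) :
    ∫ x, (sampleMean g x - ∫ y, g y ∂ν) ^ 2 ∂νⁿ = Var[g; ν] / Fintype.card ι := by
  rw [← variance_sampleMean hg, variance_eq_integral (memLp_sampleMean hg).aemeasurable,
    integral_sampleMean (hg.integrable one_le_two)]

end SampleMean

instance : ENNReal.HolderTriple 4 4 2 := ⟨by
  rw [show (4 : ℝ≥0∞) = 2 * 2 by norm_num, ENNReal.mul_inv (by simp) (by simp), ← add_mul,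
    ENNReal.inv_two_add_inv_two, one_mul]⟩

lemma prod_pow_ite_eq {ι M : Type*} [Fintype ι] [CommMonoid M] (z : ι → M) (a : ι) (p : ℕ) :
    ∏ c, z c ^ (if c = a then p else 0) = z a ^ p := by
  simp [pow_ite]

section StdGaussianPi
variable {ι : Type*} [Fintype ι]

local notation "γ" => Measure.pi fun _ : ι => gaussianReal 0 1

lemma memLp_apply_stdGaussianPi (a : ι) {p : ℝ≥0∞} (hp : p ≠ ∞) :
    MemLp (fun z => z a) p γ :=
  (memLp_id_gaussianReal' p hp).comp_measurePreserving (measurePreserving_eval _ a)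

lemma memLp_mul_apply_stdGaussianPi (a b : ι) : MemLp (fun z => z a * z b) 2 γ :=
  (memLp_apply_stdGaussianPi b (p := 4) (by simp)).mul'
    (memLp_apply_stdGaussianPi a (p := 4) (by simp))

lemma integral_prod_pow_stdGaussianPi (m : ι → ℕ) :
    ∫ z, ∏ a, z a ^ m a ∂γ = ∏ a, ∫ t, t ^ m a ∂gaussianReal 0 1 :=
  integral_fintype_prod_eq_prod (fun a t => t ^ m a)

lemma integral_mul_apply_stdGaussianPi (a b : ι) :
    ∫ z, z a * z b ∂γ = if a = b then 1 else 0 := by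
  have hm : ∀ z : ι → ℝ, z a * z b =
      ∏ c, z c ^ ((if c = a then 1 else 0) + (if c = b then 1 else 0)) := by
    intro z
    simp only [pow_add, Finset.prod_mul_distrib, prod_pow_ite_eq, pow_one]
  simp_rw [hm, integral_prod_pow_stdGaussianPi]
  split_ifs with h
  · subst h
    rw [Finset.prod_eq_single a (fun c _ hc => by simp [hc]) (by simp)]
    simp [integral_sq_gaussianReal_zero]
  · exact Finset.prod_eq_zero (Finset.mem_univ a) (by simp [h])

lemma integral_sq_mul_mul_apply_stdGaussianPi (k j j' : ι) :
    ∫ z, z k ^ 2 * (z j * z j') ∂γ = if j = j' then (if j = k then 3 else 1) else 0 := by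
  have hm : ∀ z : ι → ℝ, z k ^ 2 * (z j * z j') = ∏ c, z c ^
      ((if c = k then 2 else 0) + (if c = j then 1 else 0) + (if c = j' then 1 else 0)) := by
    intro z
    simp only [pow_add, Finset.prod_mul_distrib, prod_pow_ite_eq, pow_one, mul_assoc]
  simp_rw [hm, integral_prod_pow_stdGaussianPi]
  split_ifs with hjj hjk
  · subst hjj hjk
    rw [Finset.prod_eq_single j (fun c _ hc => by simp [hc]) (by simp)]
    simp [integral_pow_four_gaussianReal_zero_one]
  · subst hjj
    rw [Finset.prod_eq_mul k j (Ne.symm hjk) (fun c _ hc => by simp [hc.1, hc.2]) (by simp)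
      (by simp)]
    simp [Ne.symm hjk, hjk, integral_sq_gaussianReal_zero]
  -- for `j ≠ j'` one of `j`, `j'` carries exponent one, and `E z = 0`
  · by_cases hjk : j = k
    · subst hjk
      exact Finset.prod_eq_zero (Finset.mem_univ j') (by simp [Ne.symm hjj])
    · exact Finset.prod_eq_zero (Finset.mem_univ j) (by simp [hjj, hjk])

variable (v : ι → ℝ)

lemma apply_mul_dotProduct_eq_sum (z : ι → ℝ) (k : ι) :
    z k * (z ⬝ᵥ v) = ∑ j, v j * (z k * z j) := by
  simp only [dotProduct, Finset.mul_sum]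
  exact Finset.sum_congr rfl fun j _ => by ring

lemma memLp_apply_mul_dotProduct_stdGaussianPi (k : ι) :
    MemLp (fun z => z k * (z ⬝ᵥ v)) 2 γ := by
  simp_rw [apply_mul_dotProduct_eq_sum]
  exact memLp_finsetSum _ fun j _ => (memLp_mul_apply_stdGaussianPi k j).const_mul (v j)

lemma integral_apply_mul_dotProduct_stdGaussianPi (k : ι) :
    ∫ z, z k * (z ⬝ᵥ v) ∂γ = v k := by
  simp_rw [apply_mul_dotProduct_eq_sum]
  rw [integral_finsetSum _ fun j _ =>
    ((memLp_mul_apply_stdGaussianPi k j).integrable one_le_two).const_mul (v j)]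
  simp [integral_const_mul, integral_mul_apply_stdGaussianPi]

lemma integral_sq_apply_mul_sq_dotProduct_stdGaussianPi (k : ι) :
    ∫ z, z k ^ 2 * (z ⬝ᵥ v) ^ 2 ∂γ = v ⬝ᵥ v + 2 * v k ^ 2 := by
  have hexp : ∀ z : ι → ℝ, z k ^ 2 * (z ⬝ᵥ v) ^ 2 =
      ∑ j, ∑ j', v j * v j' * (z k ^ 2 * (z j * z j')) := by
    intro z
    simp_rw [sq (z ⬝ᵥ v), dotProduct, Finset.sum_mul_sum, Finset.mul_sum]
    exact Finset.sum_congr rfl fun j _ => Finset.sum_congr rfl fun j' _ => by ring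
  have hint : ∀ j j', Integrable (fun z : ι → ℝ => z k ^ 2 * (z j * z j')) γ := by
    intro j j'
    refine (memLp_one_iff_integrable.1 ((memLp_mul_apply_stdGaussianPi k j').mul'
      (memLp_mul_apply_stdGaussianPi k j) (r := 1))).congr (ae_of_all _ fun z => ?_)
    ring
  simp_rw [hexp]
  rw [integral_finsetSum _ fun j _ => integrable_finsetSum _ fun j' _ => (hint j j').const_mul _]
  simp_rw [integral_finsetSum _ fun j' _ => (hint _ j').const_mul _, integral_const_mul,
    integral_sq_mul_mul_apply_stdGaussianPi]
  simp only [mul_ite, mul_zero, Finset.sum_ite_eq, Finset.mem_univ, if_true]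
  have hsplit : ∀ j, (if j = k then v j * v j * 3 else v j * v j * 1) =
      v j * v j + if j = k then 2 * v k ^ 2 else 0 := fun j => by
    split_ifs with h
    · subst h; ring
    · ring
  simp only [hsplit, Finset.sum_add_distrib, Finset.sum_ite_eq', Finset.mem_univ, if_true,
    dotProduct]

/-- For one observation `(z, ε)` in whitened coordinates, with response `y = z ⬝ᵥ v + ε`,
this is `z k * y`. -/
def crossTerm (k : ι) (p : (ι → ℝ) × ℝ) : ℝ :=
  p.1 k * (p.1 ⬝ᵥ v + p.2)

variable (σ2 : ℝ≥0) (k : ι)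

local notation "ν" => Measure.prod γ (gaussianReal 0 σ2)

lemma memLp_crossTerm : MemLp (crossTerm v k) 2 ν := by
  have h1 : MemLp (fun p : (ι → ℝ) × ℝ => p.1 k * (p.1 ⬝ᵥ v)) 2 ν :=
    (memLp_apply_mul_dotProduct_stdGaussianPi v k).comp_fst _
  have h2 : MemLp (fun p : (ι → ℝ) × ℝ => p.1 k * p.2) 2 ν :=
    (memLp_id_gaussianReal' (μ := 0) (v := σ2) 4 (by simp)).comp_snd _ |>.mul'
      ((memLp_apply_stdGaussianPi k (p := 4) (by simp)).comp_fst _)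
  convert h1.add h2 using 1
  ext p
  simp only [crossTerm, Pi.add_apply]
  ring

lemma integral_crossTerm : ∫ p, crossTerm v k p ∂ν = v k := by
  have h : ∀ p, crossTerm v k p = p.1 k * (p.1 ⬝ᵥ v) * 1 + p.1 k * p.2 := fun p => by
    simp only [crossTerm]; ring
  have hA := (memLp_apply_mul_dotProduct_stdGaussianPi v k).integrable one_le_two
  have hz := (memLp_apply_stdGaussianPi k (p := 1) (by simp)).integrable le_rfl
  have he : Integrable (fun e : ℝ => e) (gaussianReal 0 σ2) :=
    (memLp_id_gaussianReal 1).integrable le_rfl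
  simp_rw [h]
  rw [integral_add (hA.mul_prod (integrable_const 1)) (hz.mul_prod he),
    integral_prod_mul (fun z : ι → ℝ => z k * (z ⬝ᵥ v)) (fun _ : ℝ => (1 : ℝ)),
    integral_prod_mul (fun z : ι → ℝ => z k) (fun e : ℝ => e)]
  simp [integral_apply_mul_dotProduct_stdGaussianPi]

lemma integral_sq_crossTerm :
    ∫ p, crossTerm v k p ^ 2 ∂ν = v ⬝ᵥ v + 2 * v k ^ 2 + σ2 := by
  have h : (fun p => crossTerm v k p ^ 2) = fun p : (ι → ℝ) × ℝ =>
      p.1 k ^ 2 * (p.1 ⬝ᵥ v) ^ 2 * 1 +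
        (2 * p.1 k ^ 2 * (p.1 ⬝ᵥ v) * p.2 + p.1 k ^ 2 * p.2 ^ 2) := by
    ext p; simp only [crossTerm]; ring
  have hA := memLp_apply_mul_dotProduct_stdGaussianPi v k
  have hz := memLp_apply_stdGaussianPi k (p := 2) (by simp)
  have hA2 : Integrable (fun z : ι → ℝ => z k ^ 2 * (z ⬝ᵥ v) ^ 2) γ := by
    simpa only [mul_pow] using hA.integrable_sq
  have hB : Integrable (fun z : ι → ℝ => 2 * z k ^ 2 * (z ⬝ᵥ v)) γ := by
    refine ((memLp_one_iff_integrable.1 (hA.mul' hz (r := 1))).const_mul 2).congr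
      (ae_of_all _ fun z => ?_)
    ring
  have he : Integrable (fun e : ℝ => e) (gaussianReal 0 σ2) :=
    (memLp_id_gaussianReal 1).integrable le_rfl
  have he2 : Integrable (fun e : ℝ => e ^ 2) (gaussianReal 0 σ2) :=
    (memLp_id_gaussianReal 2).integrable_sq
  have hk2 : ∫ z, z k ^ 2 ∂γ = 1 := by
    simpa [← sq] using integral_mul_apply_stdGaussianPi k k
  rw [h, integral_add (hA2.mul_prod (integrable_const 1))
      ((hB.mul_prod he).fun_add (hz.integrable_sq.mul_prod he2)),
    integral_add (hB.mul_prod he) (hz.integrable_sq.mul_prod he2),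
    integral_prod_mul (fun z : ι → ℝ => z k ^ 2 * (z ⬝ᵥ v) ^ 2) (fun _ : ℝ => (1 : ℝ)),
    integral_prod_mul (fun z : ι → ℝ => 2 * z k ^ 2 * (z ⬝ᵥ v)) (fun e : ℝ => e),
    integral_prod_mul (fun z : ι → ℝ => z k ^ 2) (fun e : ℝ => e ^ 2)]
  simp [integral_sq_apply_mul_sq_dotProduct_stdGaussianPi, integral_sq_gaussianReal_zero, hk2]

lemma variance_crossTerm : Var[crossTerm v k; ν] = v ⬝ᵥ v + v k ^ 2 + σ2 := by
  rw [variance_eq_sub (memLp_crossTerm v σ2 k)]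
  simp only [Pi.pow_apply]
  rw [integral_sq_crossTerm, integral_crossTerm]
  ring

lemma lintegral_ofReal_sum_sq_sampleMean_crossTerm_sub {κ : Type*} [Fintype κ] [Nonempty κ] :
    ∫⁻ x, ENNReal.ofReal (∑ k, (sampleMean (crossTerm v k) x - v k) ^ 2)
        ∂(Measure.pi fun _ : κ => ν) =
      ENNReal.ofReal
        ((Fintype.card ι * σ2 + (Fintype.card ι + 1) * (v ⬝ᵥ v)) / Fintype.card κ) := by
  have hint : ∀ k, Integrable (fun x => (sampleMean (crossTerm v k) x - v k) ^ 2)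
      (Measure.pi fun _ : κ => ν) :=
    fun k => integrable_sq_sampleMean_sub (memLp_crossTerm v σ2 k) _
  rw [← ofReal_integral_eq_lintegral_ofReal (integrable_finsetSum _ fun k _ => hint k)
      (ae_of_all _ fun x => Finset.sum_nonneg fun k _ => sq_nonneg _),
    integral_finsetSum _ fun k _ => hint k]
  simp_rw [← integral_crossTerm v σ2, integral_sq_sampleMean_sub (memLp_crossTerm v σ2 _),
    variance_crossTerm]
  have hvv : ∑ k, v k ^ 2 = v ⬝ᵥ v := by simp only [dotProduct, sq]
  rw [← Finset.sum_div, Finset.sum_add_distrib, Finset.sum_add_distrib, hvv]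
  simp only [Finset.sum_const, Finset.card_univ, nsmul_eq_mul]
  congr 2
  ring

end StdGaussianPi

lemma dotProduct_mulVec_eq_of_mul_self {m : Type*} [Fintype m] {Q S : Matrix m m ℝ}
    (hQ : Qᵀ = Q) (hQS : Q * Q = S) (u : m → ℝ) :
    u ⬝ᵥ (S *ᵥ u) = (Q *ᵥ u) ⬝ᵥ (Q *ᵥ u) := by
  rw [← hQS, ← mulVec_mulVec, dotProduct_mulVec, ← mulVec_transpose, hQ]

lemma mul_inv_mul_eq_one_of_mul_self {m : Type*} [Fintype m] [DecidableEq m]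
    {Q S : Matrix m m ℝ} (hQS : Q * Q = S) (hQ : IsUnit Q.det) : Q * S⁻¹ * Q = 1 := by
  subst hQS
  simp [Matrix.mul_inv_rev, Matrix.mul_assoc, nonsing_inv_mul _ hQ, mul_nonsing_inv _ hQ]

namespace Dicker

section Whitening
variable {d : ℕ} {S : Matrix (Fin d) (Fin d) ℝ}

lemma msqrt_eq_cfc (hS : S.PosSemidef) : msqrt S = cfc Real.sqrt S := by
  rw [msqrt, dif_pos hS, hS.1.cfc_eq, IsHermitian.cfc, Unitary.conjStarAlgAut_apply]
  rfl

lemma msqrt_mul_self (hS : S.PosSemidef) : msqrt S * msqrt S = S := by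
  rw [msqrt_eq_cfc hS, ← cfc_mul Real.sqrt Real.sqrt S]
  refine (cfc_congr fun x hx => Real.mul_self_sqrt ?_).trans (cfc_id' ℝ S hS.1.isSelfAdjoint)
  rw [hS.1.spectrum_real_eq_range_eigenvalues] at hx
  obtain ⟨i, rfl⟩ := hx
  exact hS.eigenvalues_nonneg i

lemma transpose_msqrt (hS : S.PosSemidef) : (msqrt S)ᵀ = msqrt S := by
  rw [msqrt_eq_cfc hS, ← conjTranspose_eq_transpose_of_trivial]
  exact (cfc_predicate Real.sqrt S : IsSelfAdjoint _)

lemma isUnit_det_msqrt (hS : S.PosDef) : IsUnit (msqrt S).det := by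
  have h : (msqrt S).det * (msqrt S).det = S.det := by
    rw [← det_mul, msqrt_mul_self hS.posSemidef]
  exact isUnit_of_mul_isUnit_left (h ▸ hS.det_pos.ne'.isUnit)

lemma msqrt_mulVec_marg_sub {n : ℕ} (hS : S.PosDef) (β : Fin d → ℝ) (ω : Omega n d) :
    msqrt S *ᵥ (marg S (resp S β ω) (dMat S ω) - β) = fun k =>
      sampleMean (crossTerm (msqrt S *ᵥ β) k) (fun i => (ω.1 i, ω.2 i)) - (msqrt S *ᵥ β) k := by
  have hQSQ := mul_inv_mul_eq_one_of_mul_self (msqrt_mul_self hS.posSemidef)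
    (isUnit_det_msqrt hS)
  set Q := msqrt S
  have hXt : (dMat S ω)ᵀ = Q * (of ω.1)ᵀ := by
    rw [dMat, transpose_mul, transpose_msqrt hS.posSemidef]
  have hy : resp S β ω = of ω.1 *ᵥ (Q *ᵥ β) + ω.2 := by
    rw [resp, dMat, ← mulVec_mulVec]
  rw [marg, mulVec_sub, mulVec_smul, mulVec_mulVec, hXt, ← Matrix.mul_assoc,
    ← Matrix.mul_assoc, hQSQ, Matrix.one_mul, hy]
  ext k
  simp only [Pi.sub_apply, Pi.smul_apply, smul_eq_mul, sampleMean, crossTerm, Fintype.card_fin]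
  rfl

lemma dotProduct_mulVec_marg_sub {n : ℕ} (hS : S.PosDef) (β : Fin d → ℝ) (ω : Omega n d) :
    (marg S (resp S β ω) (dMat S ω) - β) ⬝ᵥ
        (S *ᵥ (marg S (resp S β ω) (dMat S ω) - β)) =
      ∑ k, (sampleMean (crossTerm (msqrt S *ᵥ β) k) (fun i => (ω.1 i, ω.2 i)) -
        (msqrt S *ᵥ β) k) ^ 2 := by
  rw [dotProduct_mulVec_eq_of_mul_self (transpose_msqrt hS.posSemidef)
    (msqrt_mul_self hS.posSemidef), msqrt_mulVec_marg_sub hS]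
  simp only [dotProduct, sq]

end Whitening

theorem statement3_general (n d : ℕ) (hn : 0 < n)
    (S : Matrix (Fin d) (Fin d) ℝ) (hS : S.PosDef)
    (β : Fin d → ℝ) (σ2 : ℝ≥0) (hσ : 0 < σ2) :
    risk n S β σ2 (marg S) =
      ENNReal.ofReal ((d : ℝ) / n + snr S β σ2 * ((d : ℝ) + 1) / n) := by
  have : Nonempty (Fin n) := ⟨⟨0, hn⟩⟩
  set v := msqrt S *ᵥ β
  have he := (measurePreserving_arrowProdEquivProdArrow (Fin d → ℝ) ℝ (Fin n)
    (fun _ => Measure.pi fun _ => gaussianReal 0 1) (fun _ => gaussianReal 0 σ2)).symm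
  have hvv : v ⬝ᵥ v = β ⬝ᵥ S *ᵥ β :=
    (dotProduct_mulVec_eq_of_mul_self (transpose_msqrt hS.posSemidef)
      (msqrt_mul_self hS.posSemidef) β).symm
  calc risk n S β σ2 (marg S)
      = (σ2 : ℝ≥0∞)⁻¹ * ∫⁻ x, ENNReal.ofReal (∑ k, (sampleMean (crossTerm v k) x - v k) ^ 2)
          ∂(Measure.pi fun _ => (Measure.pi fun _ => gaussianReal 0 1).prod
            (gaussianReal 0 σ2)) := by
        rw [risk, ← he.lintegral_comp_emb (MeasurableEquiv.measurableEmbedding _)]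
        simp_rw [dotProduct_mulVec_marg_sub hS]
        rfl
    _ = _ := by
      rw [lintegral_ofReal_sum_sq_sampleMean_crossTerm_sub, ← ENNReal.ofReal_coe_nnreal,
        ← ENNReal.ofReal_inv_of_pos (by exact_mod_cast hσ),
        ← ENNReal.ofReal_mul (by positivity)]
      congr 1
      simp only [Fintype.card_fin, snr, hvv]
      field_simp

/-- The predictive risk of the marginal regression estimator is
`d/n + η²(d+1)/n`. -/
theorem statement3 (n d : ℕ) (hn : 0 < n) (hd : 0 < d)
    (S : Matrix (Fin d) (Fin d) ℝ) (hS : S.PosDef)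
    (β : Fin d → ℝ) (σ2 : ℝ≥0) (hσ : 0 < σ2) :
    risk n S β σ2 (marg S) =
      ENNReal.ofReal ((d : ℝ) / n + snr S β σ2 * ((d : ℝ) + 1) / n) :=
  statement3_general n d hn S hS β σ2 hσ

end Dicker

end
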